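/- Let K be a number field. For every nonzero fractional ideal 𝔞 of 𝒪_K and every s = (s₁, …, sₙ) ∈ ℝⁿ the following hold. (Existence) There exist h ∈ K^* and an f-representation (𝔟, t) with 𝔟 = (1/h)𝔞 and tᵢ = sᵢ − log wᵢ(h) for all 1 ≤ i ≤ n. (Uniqueness) If (𝔟, t) and (𝔟', t') are f-representations for which there exist h, h' ∈ K^* with 𝔟 = (1/h)𝔞, tᵢ = sᵢ − log wᵢ(h), 𝔟' = (1/h')𝔞, and t'ᵢ = sᵢ − log wᵢ(h') for all i, then 𝔟 ∼ 𝔟' and t = t'. (Thus every Arakelov divisor class of K is represented by exactly one f-representation up to the equivalence ∼.) -/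

import Mathlib

/-!
Rescaling by `h` identifies the f-representations `(h⁻¹𝔞, s - log w(h))` with the elements
`h ≠ 0` of `𝔞` that are `≼`-least among the nonzero elements of the box
`B(𝔞, (s, log w₀(h)))`. Minkowski's theorem gives a nonzero `x₀ ∈ 𝔞` that is small at every
place except `w₀`; the box of `x₀` is finite, and its `≼`-least nonzero element is such an `h`.
For two such elements `h, h'`, the one with the smaller `w₀`-value lies in the box of the other,
so the lexicographic comparison forces `w₀(h) = w₀(h')`; then each lies in the box of the other,
so `h` and `h'` have the same absolute values at all places, whence `𝔟 ∼ 𝔟'` and `t = t'`.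
-/

open NumberField
open scoped nonZeroDivisors

/-- Lexicographic comparison of real tuples: `a ≤ₗₑₓ b`. -/
def lexLe {m : ℕ} (a b : Fin m → ℝ) : Prop :=
  a = b ∨ ∃ i : Fin m, a i < b i ∧ ∀ j : Fin m, j < i → a j = b j

/-- The vector of absolute values of `h` at the infinite places, the distinguished place `w₀`
first. -/
def absVec {K : Type*} [Field K] [NumberField K] {n : ℕ}
    (w₀ : InfinitePlace K) (w : Fin n → InfinitePlace K) (h : K) : Fin (n + 1) → ℝ :=
  Fin.cons (w₀ h) (fun i => w i h)

/-- The total preorder `≼` on `K^*`: `h ≼ h'` iff the vector of absolute values of `h` is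
lexicographically at most that of `h'` (distinguished place first). -/
def preceq {K : Type*} [Field K] [NumberField K] {n : ℕ}
    (w₀ : InfinitePlace K) (w : Fin n → InfinitePlace K) (h h' : K) : Prop :=
  lexLe (absVec w₀ w h) (absVec w₀ w h')

/-- The box `B(𝔟, (t, ℓ)) = {h ∈ 𝔟 : w₀(h) ≤ exp ℓ and wᵢ(h) ≤ exp tᵢ for 1 ≤ i ≤ n}`. -/
def box {K : Type*} [Field K] [NumberField K] {n : ℕ}
    (w₀ : InfinitePlace K) (w : Fin n → InfinitePlace K)
    (𝔟 : FractionalIdeal (𝓞 K)⁰ K) (t : Fin n → ℝ) (ℓ : ℝ) : Set K :=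
  {h : K | h ∈ 𝔟 ∧ w₀ h ≤ Real.exp ℓ ∧ ∀ i : Fin n, w i h ≤ Real.exp (t i)}

/-- A pair `(𝔟, t)` is an *f-representation* if `1 ∈ B(𝔟, (t, 0))` and `1` is a smallest
element of `B(𝔟, (t, 0)) ∖ {0}` with respect to `≼`. -/
def IsFRep {K : Type*} [Field K] [NumberField K] {n : ℕ}
    (w₀ : InfinitePlace K) (w : Fin n → InfinitePlace K)
    (𝔟 : FractionalIdeal (𝓞 K)⁰ K) (t : Fin n → ℝ) : Prop :=
  (1 : K) ∈ box w₀ w 𝔟 t 0 ∧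
  ∀ h ∈ box w₀ w 𝔟 t 0, h ≠ 0 → preceq w₀ w 1 h

/-- Two nonzero fractional ideals are *equivalent* if they differ by a principal ideal whose
generator has absolute value `1` at every infinite place. -/
def EquivIdeal {K : Type*} [Field K] [NumberField K]
    (𝔟 𝔟' : FractionalIdeal (𝓞 K)⁰ K) : Prop :=
  ∃ g : K, g ≠ 0 ∧ 𝔟 = FractionalIdeal.spanSingleton (𝓞 K)⁰ g * 𝔟' ∧
    ∀ v : InfinitePlace K, v g = 1

open FractionalIdeal
open scoped NNReal ENNReal

theorem lexLe_iff_toLex_le {m : ℕ} {a b : Fin m → ℝ} : lexLe a b ↔ toLex a ≤ toLex b := by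
  rw [le_iff_lt_or_eq, toLex_inj, or_comm, lexLe]
  refine or_congr Iff.rfl ⟨fun ⟨i, hi, hj⟩ => ⟨i, hj, hi⟩, fun ⟨i, hj, hi⟩ => ⟨i, hi, hj⟩⟩

theorem lexLe_mul_left {m : ℕ} {a b c : Fin m → ℝ} (hc : ∀ i, 0 < c i) (h : lexLe a b) :
    lexLe (c * a) (c * b) := by
  rcases h with rfl | ⟨i, hi, hj⟩
  · exact Or.inl rfl
  · exact Or.inr ⟨i, mul_lt_mul_of_pos_left hi (hc i), fun j hji => by simp [hj j hji]⟩

section Preceq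

variable {K : Type*} [Field K] [NumberField K] {n : ℕ}
  (w₀ : InfinitePlace K) (w : Fin n → InfinitePlace K)

theorem preceq_iff_toLex_le {x y : K} :
    preceq w₀ w x y ↔ toLex (absVec w₀ w x) ≤ toLex (absVec w₀ w y) :=
  lexLe_iff_toLex_le

theorem absVec_mul (x y : K) : absVec w₀ w (x * y) = absVec w₀ w x * absVec w₀ w y := by
  ext j
  cases j using Fin.cases <;> simp [absVec]

theorem absVec_pos {x : K} (hx : x ≠ 0) (j : Fin (n + 1)) : 0 < absVec w₀ w x j := by
  cases j using Fin.cases <;> simpa [absVec] using InfinitePlace.pos_iff.2 hx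

theorem preceq_mul_left_iff {x : K} (hx : x ≠ 0) (y z : K) :
    preceq w₀ w (x * y) (x * z) ↔ preceq w₀ w y z := by
  refine ⟨fun h => ?_, fun h => ?_⟩
  · simpa [preceq, ← absVec_mul, inv_mul_cancel_left₀ hx] using
      lexLe_mul_left (absVec_pos w₀ w (inv_ne_zero hx)) h
  · simpa [preceq, absVec_mul] using lexLe_mul_left (absVec_pos w₀ w hx) h

variable {w₀ w}

theorem apply_eq_of_absVec_eq
    (hw : Function.Surjective (Fin.cons w₀ w : Fin (n + 1) → InfinitePlace K)) {x y : K}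
    (h : absVec w₀ w x = absVec w₀ w y) (v : InfinitePlace K) : v x = v y := by
  obtain ⟨j, rfl⟩ := hw v
  have := congrFun h j
  cases j using Fin.cases <;> simpa [absVec] using this

theorem preceq.apply_le {x y : K} (h : preceq w₀ w x y) : w₀ x ≤ w₀ y :=
  Pi.apply_le_of_toLex ((preceq_iff_toLex_le w₀ w).1 h) (i := 0) fun j hj =>
    absurd hj j.not_lt_zero

theorem preceq.absVec_eq {x y : K} (hxy : preceq w₀ w x y) (hyx : preceq w₀ w y x) :
    absVec w₀ w x = absVec w₀ w y :=
  toLex_inj.1 (le_antisymm ((preceq_iff_toLex_le w₀ w).1 hxy) ((preceq_iff_toLex_le w₀ w).1 hyx))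

theorem exists_preceq_forall {S : Set K} (hS : S.Finite) (hne : S.Nonempty) :
    ∃ x ∈ S, ∀ y ∈ S, preceq w₀ w x y := by
  simpa only [preceq_iff_toLex_le] using S.exists_min_image (fun x => toLex (absVec w₀ w x)) hS hne

end Preceq

section Box

variable {K : Type*} [Field K] [NumberField K] {n : ℕ}
  {w₀ : InfinitePlace K} {w : Fin n → InfinitePlace K}

theorem box_subset_box {𝔟 : FractionalIdeal (𝓞 K)⁰ K} {t : Fin n → ℝ} {ℓ ℓ' : ℝ}
    (hℓ : ℓ ≤ ℓ') :
    box w₀ w 𝔟 t ℓ ⊆ box w₀ w 𝔟 t ℓ' :=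
  fun _ ⟨hx𝔟, hx₀, hxw⟩ => ⟨hx𝔟, hx₀.trans (Real.exp_le_exp.2 hℓ), hxw⟩

theorem mem_box_spanSingleton_inv_mul_iff {x : K} (hx : x ≠ 0) {𝔟 : FractionalIdeal (𝓞 K)⁰ K}
    {t : Fin n → ℝ} {ℓ : ℝ} {y : K} :
    y ∈ box w₀ w (spanSingleton (𝓞 K)⁰ x⁻¹ * 𝔟) t ℓ ↔
      x * y ∈ box w₀ w 𝔟 (fun i => t i + Real.log (w i x)) (ℓ + Real.log (w₀ x)) := by
  have hmem : (∃ y' ∈ 𝔟, y = x⁻¹ * y') ↔ x * y ∈ 𝔟 :=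
    ⟨fun ⟨y', hy', hy⟩ => by rwa [hy, mul_inv_cancel_left₀ hx],
      fun h => ⟨_, h, (inv_mul_cancel_left₀ hx y).symm⟩⟩
  have hscale : ∀ (v : InfinitePlace K) (c : ℝ), v x * v y ≤ c * v x ↔ v y ≤ c := fun v c => by
    rw [mul_comm c]; exact mul_le_mul_iff_of_pos_left (InfinitePlace.pos_iff.2 hx)
  simp only [box, Set.mem_ofPred_eq, mem_singleton_mul, hmem, map_mul, Real.exp_add,
    Real.exp_log (InfinitePlace.pos_iff.2 hx), hscale]

theorem finite_setOf_mem_forall_le (𝔟 : FractionalIdeal (𝓞 K)⁰ K) (C : ℝ) :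
    {x : K | x ∈ 𝔟 ∧ ∀ v : InfinitePlace K, v x ≤ C}.Finite := by
  obtain ⟨d, hd, hint⟩ := 𝔟.isFractional
  set dK : K := algebraMap (𝓞 K) K d
  have hdK : dK ≠ 0 := by simpa [dK] using nonZeroDivisors.ne_zero hd
  set D : ℝ := ∑ v : InfinitePlace K, v dK
  refine Set.Finite.of_finite_image (f := (dK * ·)) ?_ (mul_right_injective₀ hdK).injOn
  refine (Embeddings.finite_of_norm_le K ℂ (D * max C 0)).subset ?_
  rintro _ ⟨x, ⟨hx𝔟, hxC⟩, rfl⟩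
  refine ⟨?_, fun φ => ?_⟩
  · obtain ⟨c, hc⟩ := hint x hx𝔟
    rw [Algebra.smul_def] at hc
    simpa [dK, ← hc] using c.isIntegral_coe
  · have hdD : InfinitePlace.mk φ dK ≤ D :=
      Finset.single_le_sum (f := fun v : InfinitePlace K => v dK) (fun v _ => by positivity)
        (Finset.mem_univ _)
    calc ‖φ (dK * x)‖ = InfinitePlace.mk φ dK * InfinitePlace.mk φ x := by
          simp [InfinitePlace.apply]
      _ ≤ D * max C 0 :=
          mul_le_mul hdD ((hxC _).trans (le_max_left _ _)) (by positivity)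
            ((AbsoluteValue.nonneg _ _).trans hdD)

theorem box_finite (hw : Function.Surjective (Fin.cons w₀ w : Fin (n + 1) → InfinitePlace K))
    (𝔟 : FractionalIdeal (𝓞 K)⁰ K) (t : Fin n → ℝ) (ℓ : ℝ) : (box w₀ w 𝔟 t ℓ).Finite := by
  refine (finite_setOf_mem_forall_le 𝔟 (Real.exp ℓ + ∑ i, Real.exp (t i))).subset ?_
  rintro x ⟨hx𝔟, hx₀, hxw⟩
  refine ⟨hx𝔟, fun v => ?_⟩
  have hsum : ∀ i, Real.exp (t i) ≤ ∑ i, Real.exp (t i) := fun i =>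
    Finset.single_le_sum (fun j _ => (Real.exp_pos (t j)).le) (Finset.mem_univ i)
  obtain ⟨j, rfl⟩ := hw v
  cases j using Fin.cases with
  | zero => simpa using hx₀.trans (le_add_of_nonneg_right (by positivity))
  | succ i => simpa using (hxw i).trans ((hsum i).trans (le_add_of_nonneg_left (by positivity)))

end Box

open NumberField.mixedEmbedding in
theorem exists_ne_zero_mem_forall_lt {K : Type*} [Field K] [NumberField K]
    {𝔟 : FractionalIdeal (𝓞 K)⁰ K} (h𝔟 : 𝔟 ≠ 0) (w₀ : InfinitePlace K)
    {c : InfinitePlace K → ℝ} (hc : ∀ v, v ≠ w₀ → 0 < c v) :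
    ∃ x ∈ 𝔟, x ≠ 0 ∧ ∀ v, v ≠ w₀ → v x < c v := by
  classical
  obtain ⟨N, hN⟩ := ENNReal.exists_nat_gt (minkowskiBound_lt_top K (Units.mk0 𝔟 h𝔟)).ne
  obtain ⟨g, hgc, hg⟩ := adjust_f K (f := fun v => (c v).toNNReal) (N + 1) fun v hv =>
    (Real.toNNReal_pos.2 (hc v hv)).ne'
  have hvol : minkowskiBound K (Units.mk0 𝔟 h𝔟) <
      MeasureTheory.volume (convexBodyLT K g) := by
    rw [convexBodyLT_volume, hg]
    calc minkowskiBound K (Units.mk0 𝔟 h𝔟) < N := hN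
      _ ≤ ((N + 1 : ℝ≥0) : ℝ≥0∞) := by push_cast; exact le_self_add
      _ ≤ _ := le_mul_of_one_le_left' (by exact_mod_cast one_le_convexBodyLTFactor K)
  obtain ⟨x, hx𝔟, hx0, hxg⟩ := exists_ne_zero_mem_ideal_lt K _ hvol
  refine ⟨x, hx𝔟, hx0, fun v hv => ?_⟩
  simpa [hgc v hv, (hc v hv).le] using hxg v

section MinimalInBox

variable {K : Type*} [Field K] [NumberField K] {n : ℕ}
  {w₀ : InfinitePlace K} {w : Fin n → InfinitePlace K} {𝔞 : FractionalIdeal (𝓞 K)⁰ K}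
  {s : Fin n → ℝ}

variable (w₀ w 𝔞 s) in
def IsMinimalInBox (h : K) : Prop :=
  h ≠ 0 ∧ h ∈ box w₀ w 𝔞 s (Real.log (w₀ h)) ∧
    ∀ y ∈ box w₀ w 𝔞 s (Real.log (w₀ h)), y ≠ 0 → preceq w₀ w h y

theorem isFRep_spanSingleton_inv_mul_iff {h : K} (hh : h ≠ 0) :
    IsFRep w₀ w (spanSingleton (𝓞 K)⁰ h⁻¹ * 𝔞) (fun i => s i - Real.log (w i h)) ↔
      IsMinimalInBox w₀ w 𝔞 s h := by
  have hbox : ∀ y,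
      y ∈ box w₀ w (spanSingleton (𝓞 K)⁰ h⁻¹ * 𝔞) (fun i => s i - Real.log (w i h)) 0 ↔
        h * y ∈ box w₀ w 𝔞 s (Real.log (w₀ h)) := fun y => by
    simp only [mem_box_spanSingleton_inv_mul_iff hh, sub_add_cancel, zero_add]
  refine ⟨fun ⟨h1, hmin⟩ => ⟨hh, by simpa using (hbox 1).1 h1, fun y hy hy0 => ?_⟩,
    fun ⟨_, hhB, hmin⟩ => ⟨(hbox 1).2 (by simpa), fun g hg hg0 => ?_⟩⟩
  · have hy' : h * (h⁻¹ * y) = y := mul_inv_cancel_left₀ hh y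
    have := hmin (h⁻¹ * y) ((hbox _).2 (hy'.symm ▸ hy)) (by simp [hh, hy0])
    simpa [hy'] using (preceq_mul_left_iff w₀ w hh 1 _).2 this
  · exact (preceq_mul_left_iff w₀ w hh 1 g).1
      (by simpa using hmin _ ((hbox g).1 hg) (mul_ne_zero hh hg0))

variable (s) in
theorem exists_isMinimalInBox
    (hw : Function.Bijective (Fin.cons w₀ w : Fin (n + 1) → InfinitePlace K)) (h𝔞 : 𝔞 ≠ 0) :
    ∃ h, IsMinimalInBox w₀ w 𝔞 s h := by
  have hw_ne : ∀ i, w i ≠ w₀ := fun i hi => i.succ_ne_zero (hw.1 (by simpa using hi))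
  have hs : ∀ i, Real.exp (-∑ j, |s j|) ≤ Real.exp (s i) := fun i => Real.exp_le_exp.2 <|
    (neg_le_neg (Finset.single_le_sum (fun j _ => abs_nonneg (s j)) (Finset.mem_univ i))).trans
      (neg_abs_le (s i))
  obtain ⟨x₀, hx₀𝔞, hx₀0, hx₀⟩ := exists_ne_zero_mem_forall_lt h𝔞 w₀
    (c := fun _ => Real.exp (-∑ j, |s j|)) fun _ _ => Real.exp_pos _
  have hx₀box : x₀ ∈ box w₀ w 𝔞 s (Real.log (w₀ x₀)) :=
    ⟨hx₀𝔞, (Real.exp_log (InfinitePlace.pos_iff.2 hx₀0)).ge,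
      fun i => (hx₀ _ (hw_ne i)).le.trans (hs i)⟩
  obtain ⟨h, ⟨hhbox, hh0 : h ≠ 0⟩, hmin⟩ := exists_preceq_forall (w₀ := w₀) (w := w)
    ((box_finite hw.2 𝔞 s _).sdiff (t := {0})) ⟨x₀, hx₀box, hx₀0⟩
  have hle : Real.log (w₀ h) ≤ Real.log (w₀ x₀) :=
    (Real.log_le_iff_le_exp (InfinitePlace.pos_iff.2 hh0)).2 hhbox.2.1
  exact ⟨h, hh0, ⟨hhbox.1, (Real.exp_log (InfinitePlace.pos_iff.2 hh0)).ge, hhbox.2.2⟩,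
    fun y hy hy0 => hmin y ⟨box_subset_box hle hy, hy0⟩⟩

theorem IsMinimalInBox.absVec_eq {h h' : K} (hmin : IsMinimalInBox w₀ w 𝔞 s h)
    (hmin' : IsMinimalInBox w₀ w 𝔞 s h') : absVec w₀ w h = absVec w₀ w h' := by
  wlog hle : w₀ h' ≤ w₀ h generalizing h h'
  · exact (this hmin' hmin (le_of_not_ge hle)).symm
  obtain ⟨hh0, hhbox, hhmin⟩ := hmin
  obtain ⟨hh'0, hh'box, hh'min⟩ := hmin'
  have hhh' : preceq w₀ w h h' :=
    hhmin h' (box_subset_box (Real.log_le_log (InfinitePlace.pos_iff.2 hh'0) hle) hh'box) hh'0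
  have heq : w₀ h' = w₀ h := le_antisymm hle hhh'.apply_le
  exact hhh'.absVec_eq (hh'min h (heq ▸ hhbox) hh0)

end MinimalInBox

/-- Let `K` be a number field with infinite places `w₀, w₁, …, wₙ`. For
every nonzero fractional ideal `𝔞` and every `s ∈ ℝⁿ`: (Existence) there are `h ∈ K^*` and an
f-representation `(𝔟, t)` with `𝔟 = (1/h)𝔞` and `tᵢ = sᵢ − log wᵢ(h)`. (Uniqueness) any two
f-representations obtained this way from `(𝔞, s)` satisfy `𝔟 ∼ 𝔟'` and `t = t'`. Thus every
Arakelov divisor class is represented by exactly one f-representation up to `∼`. -/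
theorem stmt17 {K : Type*} [Field K] [NumberField K] {n : ℕ}
    (w₀ : InfinitePlace K) (w : Fin n → InfinitePlace K)
    (hw : Function.Bijective (Fin.cons w₀ w : Fin (n + 1) → InfinitePlace K))
    (𝔞 : FractionalIdeal (𝓞 K)⁰ K) (h𝔞 : 𝔞 ≠ 0) (s : Fin n → ℝ) :
    (∃ (h : K) (t : Fin n → ℝ), h ≠ 0 ∧
      IsFRep w₀ w (FractionalIdeal.spanSingleton (𝓞 K)⁰ h⁻¹ * 𝔞) t ∧
      ∀ i : Fin n, t i = s i - Real.log (w i h)) ∧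
    (∀ (𝔟 𝔟' : FractionalIdeal (𝓞 K)⁰ K) (t t' : Fin n → ℝ),
      IsFRep w₀ w 𝔟 t → IsFRep w₀ w 𝔟' t' →
      (∃ h : K, h ≠ 0 ∧ 𝔟 = FractionalIdeal.spanSingleton (𝓞 K)⁰ h⁻¹ * 𝔞 ∧
        ∀ i : Fin n, t i = s i - Real.log (w i h)) →
      (∃ h' : K, h' ≠ 0 ∧ 𝔟' = FractionalIdeal.spanSingleton (𝓞 K)⁰ h'⁻¹ * 𝔞 ∧
        ∀ i : Fin n, t' i = s i - Real.log (w i h')) →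
      EquivIdeal 𝔟 𝔟' ∧ t = t') := by
  refine ⟨?_, ?_⟩
  · obtain ⟨h, hmin⟩ := exists_isMinimalInBox s hw h𝔞
    exact ⟨h, _, hmin.1, (isFRep_spanSingleton_inv_mul_iff hmin.1).2 hmin, fun i => rfl⟩
  · rintro _ _ t t' hrep hrep' ⟨h, hh0, rfl, ht⟩ ⟨h', hh'0, rfl, ht'⟩
    obtain rfl : t = _ := funext ht
    obtain rfl : t' = _ := funext ht'
    have hv : ∀ v : InfinitePlace K, v h = v h' := apply_eq_of_absVec_eq hw.2 <|
      ((isFRep_spanSingleton_inv_mul_iff hh0).1 hrep).absVec_eq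
        ((isFRep_spanSingleton_inv_mul_iff hh'0).1 hrep')
    refine ⟨⟨h' / h, div_ne_zero hh'0 hh0, ?_, fun v => ?_⟩, funext fun i => by rw [hv]⟩
    · rw [← mul_assoc, spanSingleton_mul_spanSingleton]
      congr 2
      field_simp
    · rw [map_div₀, hv, div_self (InfinitePlace.pos_iff.2 hh'0).ne']
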